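/- Specialization to AC power flow: under x(i) = (V(i),θ(i)) constant on blocks, Σ_{i∈Ṽ_{i^c}} [Σ_{j∈N[i]} G_{ij} V(i)V(j) cos(θ(i)−θ(j))] = G^c_{i^c i^c} (V^c(i^c))² + Σ_{j^c∈N_{G^c}(i^c)} G^c_{i^c j^c} V^c(i^c) V^c(j^c) cos(θ^c(i^c) − θ^c(j^c)), where G^c_{i^c i^c} = Σ_{i∈Ṽ_{i^c}} G_{ii} + Σ_{{i,j}∈E_{i^c,i^c}} 2G_{ij} and G^c_{i^c j^c} = Σ_{{i,j}∈E_{i^c,j^c}} G_{ij} for i^c ≠ j^c. -/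
import Mathlib


open Finset
open scoped Classical


lemma edge_sum_intra {Vt C : Type*} [Fintype Vt] [DecidableEq Vt] [DecidableEq C]
    (G : SimpleGraph Vt) [DecidableRel G.Adj] (φ : Vt → C)
    (Gm : Vt → Vt → ℝ) (hGm : ∀ i j, Gm i j = Gm j i) (ic : C) :
    ∑ e ∈ G.edgeFinset.filter
        (fun e => ∃ i j, e = s(i, j) ∧ φ i = ic ∧ φ j = ic),
      2 * Sym2.lift ⟨Gm, hGm⟩ e
    = ∑ i ∈ univ.filter (fun i => φ i = ic), ∑ j ∈ univ.filter (fun j => φ j = ic),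
        if G.Adj i j then Gm i j else 0 := by
  set S := univ.filter (fun i => φ i = ic) with hS
  set P := (S ×ˢ S).filter (fun p : Vt × Vt => G.Adj p.1 p.2) with hP
  set t := G.edgeFinset.filter (fun e => ∃ i j, e = s(i, j) ∧ φ i = ic ∧ φ j = ic) with ht
  have hmaps : ∀ p ∈ P, (fun p : Vt × Vt => s(p.1, p.2)) p ∈ t := by
    rintro ⟨a, b⟩ hp
    rw [hP, mem_filter, mem_product, hS, mem_filter, mem_filter] at hp
    rw [ht, mem_filter, SimpleGraph.mem_edgeFinset]
    exact ⟨hp.2, a, b, rfl, hp.1.1.2, hp.1.2.2⟩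
  have h := Finset.sum_fiberwise_of_maps_to (f := fun p : Vt × Vt => Gm p.1 p.2) hmaps
  calc ∑ e ∈ t, 2 * Sym2.lift ⟨Gm, hGm⟩ e
      = ∑ e ∈ t, ∑ p ∈ P.filter (fun p => s(p.1, p.2) = e), Gm p.1 p.2 := by
        apply Finset.sum_congr rfl
        rintro e he
        rw [ht, mem_filter, SimpleGraph.mem_edgeFinset] at he
        obtain ⟨hadj, i, j, rfl, hi, hj⟩ := he
        have hij : G.Adj i j := by rwa [SimpleGraph.mem_edgeSet] at hadj
        have hne : i ≠ j := hij.ne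
        have hfib : P.filter (fun p => s(p.1, p.2) = s(i, j)) = {(i, j), (j, i)} := by
          ext ⟨a, b⟩
          simp only [hP, hS, mem_filter, mem_product, mem_univ, true_and, mem_insert,
            mem_singleton, Sym2.eq_iff, Prod.ext_iff]
          constructor
          · rintro ⟨⟨⟨h1, h2⟩, h3⟩, (⟨ha, hb⟩ | ⟨ha, hb⟩)⟩
            · exact Or.inl ⟨ha, hb⟩
            · exact Or.inr ⟨ha, hb⟩
          · rintro (⟨ha, hb⟩ | ⟨ha, hb⟩) <;> subst ha <;> subst hb
            · exact ⟨⟨⟨hi, hj⟩, hij⟩, Or.inl ⟨rfl, rfl⟩⟩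
            · exact ⟨⟨⟨hj, hi⟩, hij.symm⟩, Or.inr ⟨rfl, rfl⟩⟩
        rw [hfib, Finset.sum_pair (by simp [Prod.ext_iff, hne])]
        simp only [Sym2.lift_mk]
        rw [hGm j i]; ring
    _ = ∑ p ∈ P, Gm p.1 p.2 := h
    _ = ∑ i ∈ S, ∑ j ∈ S, if G.Adj i j then Gm i j else 0 := by
        rw [hP, Finset.sum_filter, Finset.sum_product]

lemma edge_sum_cross {Vt C : Type*} [Fintype Vt] [DecidableEq Vt] [DecidableEq C]
    (G : SimpleGraph Vt) [DecidableRel G.Adj] (φ : Vt → C)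
    (Gm : Vt → Vt → ℝ) (hGm : ∀ i j, Gm i j = Gm j i) (ic jc : C) (hicjc : ic ≠ jc) :
    ∑ e ∈ G.edgeFinset.filter
        (fun e => ∃ i j, e = s(i, j) ∧ φ i = ic ∧ φ j = jc),
      Sym2.lift ⟨Gm, hGm⟩ e
    = ∑ i ∈ univ.filter (fun i => φ i = ic), ∑ j ∈ univ.filter (fun j => φ j = jc),
        if G.Adj i j then Gm i j else 0 := by
  set S := univ.filter (fun i => φ i = ic) with hS
  set T := univ.filter (fun j => φ j = jc) with hT
  set P := (S ×ˢ T).filter (fun p : Vt × Vt => G.Adj p.1 p.2) with hP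
  set t := G.edgeFinset.filter (fun e => ∃ i j, e = s(i, j) ∧ φ i = ic ∧ φ j = jc) with ht
  have hmaps : ∀ p ∈ P, (fun p : Vt × Vt => s(p.1, p.2)) p ∈ t := by
    rintro ⟨a, b⟩ hp
    rw [hP, mem_filter, mem_product, hS, mem_filter] at hp
    rw [hT, mem_filter] at hp
    rw [ht, mem_filter, SimpleGraph.mem_edgeFinset]
    exact ⟨hp.2, a, b, rfl, hp.1.1.2, hp.1.2.2⟩
  have h := Finset.sum_fiberwise_of_maps_to (f := fun p : Vt × Vt => Gm p.1 p.2) hmaps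
  calc ∑ e ∈ t, Sym2.lift ⟨Gm, hGm⟩ e
      = ∑ e ∈ t, ∑ p ∈ P.filter (fun p => s(p.1, p.2) = e), Gm p.1 p.2 := by
        apply Finset.sum_congr rfl
        rintro e he
        rw [ht, mem_filter, SimpleGraph.mem_edgeFinset] at he
        obtain ⟨hadj, i, j, rfl, hi, hj⟩ := he
        have hij : G.Adj i j := by rwa [SimpleGraph.mem_edgeSet] at hadj
        have hfib : P.filter (fun p => s(p.1, p.2) = s(i, j)) = {(i, j)} := by
          ext ⟨a, b⟩
          simp only [hP, hS, hT, mem_filter, mem_product, mem_univ, true_and,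
            mem_singleton, Sym2.eq_iff, Prod.ext_iff]
          constructor
          · rintro ⟨⟨⟨h1, h2⟩, h3⟩, (⟨ha, hb⟩ | ⟨ha, hb⟩)⟩
            · exact ⟨ha, hb⟩
            · subst ha; subst hb
              exact absurd (hi ▸ h2 ▸ rfl : ic = jc) hicjc
          · rintro ⟨ha, hb⟩; subst ha; subst hb
            exact ⟨⟨⟨hi, hj⟩, hij⟩, Or.inl ⟨rfl, rfl⟩⟩
        rw [hfib, Finset.sum_singleton]
        simp
    _ = ∑ p ∈ P, Gm p.1 p.2 := h
    _ = ∑ i ∈ S, ∑ j ∈ T, if G.Adj i j then Gm i j else 0 := by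
        rw [hP, Finset.sum_filter, Finset.sum_product]

/-- Specialization of the aggregation identity to AC power flow: for a symmetric
conductance matrix `Gm` supported on closed neighborhoods, and voltage
amplitudes/angles constant on partition blocks, the aggregated active-flow term
over a block equals `G^c_{i^c i^c} (V^c)² + Σ_{j^c ∈ N_{G^c}(i^c)}
G^c_{i^c j^c} V^c(i^c)V^c(j^c) cos(θ^c(i^c) − θ^c(j^c))` with the coarse
conductances `G^c` obtained by summing fine conductances (intra-block edges
counted twice, plus the diagonal terms). -/
theorem ac_power_flow_aggregation
    {Vt C : Type*} [Fintype Vt] [Fintype C] [DecidableEq Vt] [DecidableEq C]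
    (G : SimpleGraph Vt) [DecidableRel G.Adj]
    (φ : Vt → C)
    (Gm : Vt → Vt → ℝ) (hGm : ∀ i j, Gm i j = Gm j i)
    (hsupp : ∀ i j, i ≠ j → ¬ G.Adj i j → Gm i j = 0)
    (Vc : C → ℝ) (θc : C → ℝ) (Vv : Vt → ℝ) (θ : Vt → ℝ)
    (hV : ∀ i, Vv i = Vc (φ i)) (hθ : ∀ i, θ i = θc (φ i))
    (Gcd : C → ℝ) (Gco : C → C → ℝ)
    (hGcd : ∀ ic, Gcd ic =
      (∑ i ∈ univ.filter (fun i => φ i = ic), Gm i i)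
        + ∑ e ∈ G.edgeFinset.filter
            (fun e => ∃ i j, e = s(i, j) ∧ φ i = ic ∧ φ j = ic),
          2 * Sym2.lift ⟨Gm, hGm⟩ e)
    (hGco : ∀ ic jc, ic ≠ jc → Gco ic jc =
      ∑ e ∈ G.edgeFinset.filter
          (fun e => ∃ i j, e = s(i, j) ∧ φ i = ic ∧ φ j = jc),
        Sym2.lift ⟨Gm, hGm⟩ e)
    (ic : C) :
    ∑ i ∈ univ.filter (fun i => φ i = ic),
        ∑ j ∈ insert i (G.neighborFinset i),
          Gm i j * Vv i * Vv j * Real.cos (θ i - θ j)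
      =
      Gcd ic * (Vc ic) ^ 2
        + ∑ jc ∈ univ.filter (fun jc => jc ≠ ic ∧
              ∃ e ∈ G.edgeFinset, ∃ i j, e = s(i, j) ∧ φ i = ic ∧ φ j = jc),
            Gco ic jc * Vc ic * Vc jc * Real.cos (θc ic - θc jc) := by
  set S : Finset Vt := univ.filter (fun i => φ i = ic) with hS
  have hmemS : ∀ i, i ∈ S ↔ φ i = ic := by intro i; rw [hS, mem_filter]; simp
  -- Step A: extend each inner sum to univ
  have hext : ∀ i ∈ S,
      ∑ j ∈ insert i (G.neighborFinset i), Gm i j * Vv i * Vv j * Real.cos (θ i - θ j)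
        = ∑ j ∈ univ, Gm i j * Vv i * Vv j * Real.cos (θ i - θ j) := by
    intro i _
    apply Finset.sum_subset (subset_univ _)
    intro j _ hj
    have hji : i ≠ j := fun h => hj (h ▸ mem_insert_self i _)
    have hadj : ¬ G.Adj i j := fun h =>
      hj (mem_insert_of_mem (by rwa [SimpleGraph.mem_neighborFinset]))
    rw [hsupp i j hji hadj]; ring
  rw [Finset.sum_congr rfl hext]
  -- Step B: split inner sum into same-block and cross-block parts
  have hsplit : ∀ i ∈ S,
      ∑ j ∈ univ, Gm i j * Vv i * Vv j * Real.cos (θ i - θ j)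
        = (∑ j ∈ S, Gm i j * Vv i * Vv j * Real.cos (θ i - θ j))
          + ∑ j ∈ univ.filter (fun j => ¬ φ j = ic),
              Gm i j * Vv i * Vv j * Real.cos (θ i - θ j) := by
    intro i _
    rw [hS]
    exact (Finset.sum_filter_add_sum_filter_not univ _ _).symm
  rw [Finset.sum_congr rfl hsplit, Finset.sum_add_distrib]
  -- Part 1: intra-block sum
  have hpart1 : ∑ i ∈ S, ∑ j ∈ S, Gm i j * Vv i * Vv j * Real.cos (θ i - θ j)
      = Gcd ic * (Vc ic) ^ 2 := by
    have h1 : ∀ i ∈ S, ∑ j ∈ S, Gm i j * Vv i * Vv j * Real.cos (θ i - θ j)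
        = (∑ j ∈ S, Gm i j) * (Vc ic) ^ 2 := by
      intro i hi
      rw [Finset.sum_mul]
      apply Finset.sum_congr rfl
      intro j hj
      rw [hV, hV, hθ, hθ, (hmemS i).1 hi, (hmemS j).1 hj, sub_self, Real.cos_zero]
      ring
    rw [Finset.sum_congr rfl h1, ← Finset.sum_mul]
    congr 1
    rw [hGcd, edge_sum_intra G φ Gm hGm ic, ← hS]
    rw [← Finset.sum_add_distrib]
    apply Finset.sum_congr rfl
    intro i hi
    rw [← Finset.add_sum_erase S (fun j => Gm i j) hi]
    congr 1
    rw [← Finset.sum_erase (f := fun j => if G.Adj i j then Gm i j else 0) (a := i) S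
      (by simp [G.irrefl])]
    apply Finset.sum_congr rfl
    intro j hj
    have hji : i ≠ j := (Finset.ne_of_mem_erase hj).symm
    by_cases hadj : G.Adj i j
    · simp [hadj]
    · simp [hadj, hsupp i j hji hadj]
  rw [hpart1]
  congr 1
  -- Part 2: cross-block sum
  set T0 : Finset C := univ.filter (fun jc => ¬ jc = ic) with hT0
  have hfib : ∀ i ∈ S,
      ∑ j ∈ univ.filter (fun j => ¬ φ j = ic), Gm i j * Vv i * Vv j * Real.cos (θ i - θ j)
        = ∑ jc ∈ T0, ∑ j ∈ univ.filter (fun j => φ j = jc),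
            Gm i j * Vv i * Vv j * Real.cos (θ i - θ j) := by
    intro i _
    rw [← Finset.sum_fiberwise_of_maps_to (g := φ) (t := T0)
      (fun j hj => by rw [hT0, mem_filter] at *; exact ⟨mem_univ _, by simpa using hj.2⟩)]
    apply Finset.sum_congr rfl
    intro jc hjc
    rw [hT0, mem_filter] at hjc
    apply Finset.sum_congr _ (fun _ _ => rfl)
    rw [Finset.filter_filter]
    apply Finset.filter_congr
    intro j _
    simp only [and_iff_right_iff_imp]
    intro h; rw [h]; exact hjc.2
  rw [Finset.sum_congr rfl hfib, Finset.sum_comm]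
  -- evaluate each cross-block term
  have hterm : ∀ jc ∈ T0,
      ∑ i ∈ S, ∑ j ∈ univ.filter (fun j => φ j = jc),
          Gm i j * Vv i * Vv j * Real.cos (θ i - θ j)
        = (∑ i ∈ S, ∑ j ∈ univ.filter (fun j => φ j = jc),
            if G.Adj i j then Gm i j else 0) * (Vc ic * Vc jc * Real.cos (θc ic - θc jc)) := by
    intro jc hjc
    rw [hT0, mem_filter] at hjc
    rw [Finset.sum_mul]
    apply Finset.sum_congr rfl
    intro i hi
    rw [Finset.sum_mul]
    apply Finset.sum_congr rfl
    intro j hj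
    rw [mem_filter] at hj
    have hij : i ≠ j := fun h => hjc.2 (by rw [← hj.2, ← h, ← (hmemS i).1 hi])
    rw [hV, hV, hθ, hθ, (hmemS i).1 hi, hj.2]
    by_cases hadj : G.Adj i j
    · simp only [hadj, if_true]; ring
    · simp [hsupp i j hij hadj, hadj]
  rw [Finset.sum_congr rfl hterm]
  -- restrict to quotient neighbors
  set T : Finset C := univ.filter (fun jc => jc ≠ ic ∧
      ∃ e ∈ G.edgeFinset, ∃ i j, e = s(i, j) ∧ φ i = ic ∧ φ j = jc) with hT
  have hTsub : T ⊆ T0 := by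
    intro jc hjc
    rw [hT, mem_filter] at hjc
    rw [hT0, mem_filter]
    exact ⟨mem_univ _, hjc.2.1⟩
  rw [← Finset.sum_subset hTsub]
  · apply Finset.sum_congr rfl
    intro jc hjc
    rw [hT, mem_filter] at hjc
    rw [hS, ← edge_sum_cross G φ Gm hGm ic jc (fun h => hjc.2.1 h.symm),
      ← hGco ic jc (fun h => hjc.2.1 h.symm)]
    ring
  · intro jc hjc hnjc
    rw [hT0, mem_filter] at hjc
    have hzero : ∀ i ∈ S, ∀ j ∈ univ.filter (fun j => φ j = jc),
        (if G.Adj i j then Gm i j else 0) = 0 := by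
      intro i hi j hj
      rw [mem_filter] at hj
      by_cases hadj : G.Adj i j
      · exfalso
        apply hnjc
        rw [hT, mem_filter]
        refine ⟨mem_univ _, hjc.2, s(i, j), ?_, i, j, rfl, (hmemS i).1 hi, hj.2⟩
        rw [SimpleGraph.mem_edgeFinset]; exact hadj
      · simp [hadj]
    rw [Finset.sum_congr rfl (fun i hi => Finset.sum_congr rfl (hzero i hi) ),
      Finset.sum_const, Finset.sum_const]
    simp
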